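/- Fix r > 0 and define G : (0,∞) → ℝ by G(a) = (1/(2r)) ∫_{−∞}^{a} exp(−(u² + 1)/(4r)) du + (1/(2r)) ∫_0^1 exp(−(a² + 2ax + 1)/(4r)) dx. Then (i) lim_{a→∞} G(a) = (1/(2r)) ∫_{−∞}^{∞} exp(−(x² + 1)/(4r)) dx = √(π/r)·e^{−1/(4r)}, and (ii) there exists a₀ > 0 such that G′(a) < 0 for all a ≥ a₀, i.e. G is strictly decreasing on [a₀, ∞). -/

import Mathlib

/-! For `a ≠ 0` the cap integral is elementary, `(2r/a)(e^{-(a²+1)/4r} - e^{-(a+1)²/4r})`,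
so `G` is explicit up to the Gaussian integral over `Iic a`. This gives
`G'(a) = e^{-(a+1)²/4r}/a² · (1 + t + 2rt² - e^t)` with `t = a/(2r)`, which is negative as
soon as `t ≥ 12r` by the cubic Taylor bound `e^t ≥ 1 + t + t²/2 + t³/6`. For the limit, the
cap integral is at most `e^{-(a²+1)/4r}` and the integral over `Iic a` tends to the full
Gaussian integral. -/

open MeasureTheory Set

/-- The F-functional of the capped half-cylinder at scale r, centered at the axis point at
distance a inside the cylinder from the cap center, as a one-dimensional integral. -/
noncomputable def G (r a : ℝ) : ℝ :=
  (1 / (2 * r)) * (∫ u in Set.Iic a, Real.exp (-(u ^ 2 + 1) / (4 * r))) +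
  (1 / (2 * r)) * ∫ x in (0:ℝ)..1, Real.exp (-(a ^ 2 + 2 * a * x + 1) / (4 * r))

open Real Filter Topology

section SetIntegralIic

variable {E : Type*} [NormedAddCommGroup E] [NormedSpace ℝ E] {f : ℝ → E}

theorem tendsto_setIntegral_Iic_atTop (hf : Integrable f) :
    Tendsto (fun a => ∫ u in Iic a, f u) atTop (𝓝 (∫ u, f u)) :=
  (aecover_Iic tendsto_id).integral_tendsto_of_countably_generated hf

theorem hasDerivAt_setIntegral_Iic [CompleteSpace E] (hf : Integrable f) (hc : Continuous f)
    (a : ℝ) : HasDerivAt (fun b => ∫ u in Iic b, f u) (f a) a := by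
  have hsplit : (fun b => ∫ u in Iic b, f u) =
      fun b => (∫ u in Iic 0, f u) + ∫ u in 0..b, f u := by
    funext b
    rw [intervalIntegral.integral_Iic_sub_Iic hf.integrableOn hf.integrableOn |>.symm]
    abel
  rw [hsplit]
  exact (intervalIntegral.integral_hasDerivAt_right hf.intervalIntegrable
    hc.aestronglyMeasurable.stronglyMeasurableAtFilter hc.continuousAt).const_add _

end SetIntegralIic

theorem integral_exp_mul_add {b : ℝ} (hb : b ≠ 0) (c : ℝ) :
    ∫ x in (0:ℝ)..1, exp (b * x + c) = (exp (b + c) - exp c) / b := by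
  rw [intervalIntegral.integral_comp_mul_add (fun x => exp x) hb, integral_exp]
  simp [div_eq_inv_mul]

theorem one_add_add_mul_sq_lt_exp {c t : ℝ} (ht : 0 < t) (hct : 12 * c ≤ t) :
    1 + t + 2 * c * t ^ 2 < exp t := by
  have hexp := sum_le_exp_of_nonneg ht.le 4
  simp only [Finset.sum_range_succ, Finset.sum_range_zero, Nat.factorial] at hexp
  norm_num at hexp
  nlinarith [mul_le_mul_of_nonneg_left hct (sq_nonneg t), pow_pos ht 2]

noncomputable def cylinderF (r : ℝ) : ℝ :=
  (1 / (2 * r)) * ∫ x : ℝ, exp (-(x ^ 2 + 1) / (4 * r))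

variable {r : ℝ}

theorem exp_neg_sq_add_one_div (r u : ℝ) :
    exp (-(u ^ 2 + 1) / (4 * r)) = exp (-(1 / (4 * r)) * u ^ 2) * exp (-(1 / (4 * r))) := by
  rw [← exp_add]
  ring_nf

theorem integrable_exp_neg_sq_add_one_div (hr : 0 < r) :
    Integrable fun u : ℝ => exp (-(u ^ 2 + 1) / (4 * r)) := by
  simp only [exp_neg_sq_add_one_div]
  exact (integrable_exp_neg_mul_sq (by positivity)).mul_const _

theorem cylinderF_eq (hr : 0 < r) : cylinderF r = √(π / r) * exp (-1 / (4 * r)) := by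
  have hsqrt : √(π / (1 / (4 * r))) = 2 * r * √(π / r) := by
    rw [show π / (1 / (4 * r)) = (2 * r) ^ 2 * (π / r) by field_simp; ring,
      sqrt_mul (by positivity), sqrt_sq (by positivity)]
  simp only [cylinderF, exp_neg_sq_add_one_div, integral_mul_const, integral_gaussian, hsqrt]
  rw [show (-1 : ℝ) / (4 * r) = -(1 / (4 * r)) by ring]
  field_simp

theorem G_eq_of_ne_zero (hr : 0 < r) {a : ℝ} (ha : a ≠ 0) :
    G r a = (1 / (2 * r)) * (∫ u in Iic a, exp (-(u ^ 2 + 1) / (4 * r))) +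
      (exp (-(a ^ 2 + 1) / (4 * r)) - exp (-(a + 1) ^ 2 / (4 * r))) / a := by
  have hb : -(a / (2 * r)) ≠ 0 := by simp [ha, hr.ne']
  have hcap := integral_exp_mul_add hb (-(a ^ 2 + 1) / (4 * r))
  have haffine : ∀ x : ℝ, -(a / (2 * r)) * x + -(a ^ 2 + 1) / (4 * r) =
      -(a ^ 2 + 2 * a * x + 1) / (4 * r) := fun x => by field_simp; ring
  have hend : -(a / (2 * r)) + -(a ^ 2 + 1) / (4 * r) = -(a + 1) ^ 2 / (4 * r) := by
    field_simp; ring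
  simp only [haffine, hend] at hcap
  rw [G, hcap]
  field_simp
  ring

theorem tendsto_capIntegral_atTop (hr : 0 < r) :
    Tendsto (fun a : ℝ => ∫ x in (0:ℝ)..1, exp (-(a ^ 2 + 2 * a * x + 1) / (4 * r)))
      atTop (𝓝 0) := by
  have hdecay : Tendsto (fun a : ℝ => exp (-(a ^ 2 + 1) / (4 * r))) atTop (𝓝 0) := by
    simp only [neg_div]
    exact tendsto_exp_neg_atTop_nhds_zero.comp <| Tendsto.atTop_div_const (by positivity) <|
      tendsto_atTop_add_const_right _ 1 (tendsto_pow_atTop two_ne_zero)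
  refine squeeze_zero_norm' ?_ hdecay
  filter_upwards [eventually_ge_atTop 0] with a ha
  have hbound : ∀ x ∈ uIoc (0:ℝ) 1,
      ‖exp (-(a ^ 2 + 2 * a * x + 1) / (4 * r))‖ ≤ exp (-(a ^ 2 + 1) / (4 * r)) := by
    intro x hx
    rw [uIoc_of_le zero_le_one] at hx
    rw [norm_of_nonneg (exp_pos _).le, exp_le_exp]
    gcongr
    nlinarith [hx.1]
  simpa using intervalIntegral.norm_integral_le_of_norm_le_const hbound

theorem tendsto_G_atTop (hr : 0 < r) : Tendsto (G r) atTop (𝓝 (cylinderF r)) := by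
  have h := ((tendsto_setIntegral_Iic_atTop (integrable_exp_neg_sq_add_one_div hr)).const_mul
    (1 / (2 * r))).add ((tendsto_capIntegral_atTop hr).const_mul (1 / (2 * r)))
  rwa [mul_zero, add_zero] at h

theorem hasDerivAt_G (hr : 0 < r) {a : ℝ} (ha : a ≠ 0) :
    HasDerivAt (G r) (exp (-(a + 1) ^ 2 / (4 * r)) / a ^ 2 *
      (1 + a / (2 * r) + a ^ 2 / (2 * r) - exp (a / (2 * r)))) a := by
  have hG : (fun b => (1 / (2 * r)) * (∫ u in Iic b, exp (-(u ^ 2 + 1) / (4 * r))) +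
      (exp (-(b ^ 2 + 1) / (4 * r)) - exp (-(b + 1) ^ 2 / (4 * r))) / b) =ᶠ[𝓝 a] G r :=
    (eventually_ne_nhds ha).mono fun b hb => (G_eq_of_ne_zero hr hb).symm
  have hIic := (hasDerivAt_setIntegral_Iic (integrable_exp_neg_sq_add_one_div hr)
    (by fun_prop) a).const_mul (1 / (2 * r))
  have hE₁ : HasDerivAt (fun b => exp (-(b ^ 2 + 1) / (4 * r)))
      (exp (-(a ^ 2 + 1) / (4 * r)) * (-(2 * a) / (4 * r))) a := by
    simpa using (((hasDerivAt_pow 2 a).add_const 1).fun_neg.div_const (4 * r)).exp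
  have hE₂ : HasDerivAt (fun b => exp (-(b + 1) ^ 2 / (4 * r)))
      (exp (-(a + 1) ^ 2 / (4 * r)) * (-(2 * (a + 1)) / (4 * r))) a := by
    simpa using ((((hasDerivAt_id a).add_const 1).fun_pow 2).fun_neg.div_const (4 * r)).exp
  refine ((hIic.add ((hE₁.sub hE₂).div (hasDerivAt_id a) ha)).congr_of_eventuallyEq
    hG.symm).congr_deriv ?_
  have hexp : exp (-(a ^ 2 + 1) / (4 * r)) =
      exp (-(a + 1) ^ 2 / (4 * r)) * exp (a / (2 * r)) := by
    rw [← exp_add]; congr 1; field_simp; ring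
  simp only [Pi.sub_apply, id, hexp]
  field_simp
  ring

theorem deriv_G_neg (hr : 0 < r) {a : ℝ} (ha : 24 * r ^ 2 ≤ a) : deriv (G r) a < 0 := by
  have ha₀ : 0 < a := lt_of_lt_of_le (by positivity) ha
  have hsq : a ^ 2 / (2 * r) = 2 * r * (a / (2 * r)) ^ 2 := by field_simp
  have hthreshold : 12 * r ≤ a / (2 * r) := by rw [le_div_iff₀ (by positivity)]; linarith
  rw [(hasDerivAt_G hr ha₀.ne').deriv, hsq]
  exact mul_neg_of_pos_of_neg (by positivity) <|
    sub_neg.2 (one_add_add_mul_sq_lt_exp (by positivity) hthreshold)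

/-- (i) G(a) tends, as a → ∞, to the F-functional value (1/(2r))∫_ℝ e^{−(x²+1)/(4r)} dx
= √(π/r)·e^{−1/(4r)} of the full round cylinder, and (ii) G is eventually strictly
decreasing: there is a₀ > 0 with G′(a) < 0 for a ≥ a₀. -/
theorem stmt_15 (r : ℝ) (hr : 0 < r) :
    Filter.Tendsto (G r) Filter.atTop
        (nhds (Real.sqrt (Real.pi / r) * Real.exp (-1 / (4 * r)))) ∧
    ((1 / (2 * r)) * (∫ x : ℝ, Real.exp (-(x ^ 2 + 1) / (4 * r)))
        = Real.sqrt (Real.pi / r) * Real.exp (-1 / (4 * r))) ∧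
    (∃ a₀ > (0:ℝ), (∀ a ≥ a₀, deriv (G r) a < 0) ∧ StrictAntiOn (G r) (Set.Ici a₀)) := by
  refine ⟨cylinderF_eq hr ▸ tendsto_G_atTop hr, cylinderF_eq hr, 24 * r ^ 2, by positivity,
    fun a ha => deriv_G_neg hr ha, ?_⟩
  refine strictAntiOn_of_deriv_neg (convex_Ici _) (fun a ha => ?_) fun a ha => ?_
  · have ha₀ : 0 < a := lt_of_lt_of_le (by positivity) ha
    exact (hasDerivAt_G hr ha₀.ne').continuousAt.continuousWithinAt
  · exact deriv_G_neg hr (interior_subset ha)
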